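/- arXiv:1203.5722 — 8 statements merged into one kernel-verified Lean document; each statement's English description precedes it below -/
import Mathlib

section
/- Given a rational number p/q > 0 and a positive integer n, there exist only finitely many n-tuples of positive integers m_1 ≤ m_2 ≤ ... ≤ m_n such that p/q = 1/m_1 + 1/m_2 + ... + 1/m_n. -/
/-- Key lemma, by induction on `n`, with no positivity assumption on `q`. -/
theorem egyptian_key (n : ℕ) : ∀ (q : ℚ), {m : Fin n → ℕ | (∀ i, 0 < m i) ∧ Monotone m ∧
    q = ∑ i, (1 : ℚ) / (m i : ℚ)}.Finite := by
  induction n with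
  | zero => exact fun q => Set.toFinite _
  | succ n ih =>
    intro q
    rcases le_or_gt q 0 with hq | hq
    · convert Set.finite_empty
      rw [Set.eq_empty_iff_forall_notMem]
      rintro m ⟨hpos, -, hsum⟩
      have hpos' : 0 < ∑ i, (1 : ℚ) / (m i : ℚ) := by
        apply Finset.sum_pos
        · intro i _
          have : (0 : ℚ) < (m i : ℚ) := by exact_mod_cast hpos i
          positivity
        · exact Finset.univ_nonempty
      linarith
    · set B := ⌈(n + 1 : ℚ) / q⌉₊ with hB
      have hsub : {m : Fin (n + 1) → ℕ | (∀ i, 0 < m i) ∧ Monotone m ∧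
          q = ∑ i, (1 : ℚ) / (m i : ℚ)} ⊆
          ⋃ k ∈ Finset.Icc 1 B,
            {m : Fin (n + 1) → ℕ | ((∀ i, 0 < m i) ∧ Monotone m ∧
              q = ∑ i, (1 : ℚ) / (m i : ℚ)) ∧ m 0 = k} := by
        rintro m ⟨hpos, hmono, hsum⟩
        have hm0 : (0 : ℚ) < (m 0 : ℚ) := by exact_mod_cast hpos 0
        have hle : q ≤ (n + 1 : ℚ) * (1 / (m 0 : ℚ)) := by
          rw [hsum]
          calc ∑ i, (1 : ℚ) / (m i : ℚ) ≤ ∑ _i : Fin (n + 1), (1 : ℚ) / (m 0 : ℚ) := by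
                apply Finset.sum_le_sum
                intro i _
                exact one_div_le_one_div_of_le hm0 (by exact_mod_cast hmono (Fin.zero_le i))
            _ = (n + 1 : ℚ) * (1 / (m 0 : ℚ)) := by
                rw [Finset.sum_const, Finset.card_univ, Fintype.card_fin, nsmul_eq_mul]
                push_cast; ring
        have hb : (m 0 : ℚ) ≤ (n + 1 : ℚ) / q := by
          rw [le_div_iff₀ hq]
          have := (le_div_iff₀ hm0).mp
            (by rw [div_eq_mul_one_div]; exact hle : q ≤ (n + 1 : ℚ) / (m 0 : ℚ))
          linarith [this]
        have hmB : m 0 ≤ B := by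
          have h2 : (m 0 : ℚ) ≤ (B : ℚ) := hb.trans (Nat.le_ceil _)
          exact Nat.cast_le.mp h2
        simp only [Set.mem_iUnion, Finset.mem_Icc]
        exact ⟨m 0, ⟨hpos 0, hmB⟩, ⟨hpos, hmono, hsum⟩, rfl⟩
      refine Set.Finite.subset (Set.Finite.biUnion (Finset.Icc 1 B).finite_toSet ?_) hsub
      intro k hk
      apply Set.Finite.of_finite_image (f := Fin.tail)
      · apply Set.Finite.subset (ih (q - 1 / (k : ℚ)))
        rintro t ⟨m, ⟨⟨hpos, hmono, hsum⟩, hm0⟩, rfl⟩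
        refine ⟨fun i => hpos i.succ, fun i j hij => hmono (Fin.succ_le_succ_iff.mpr hij), ?_⟩
        have : q = (1 : ℚ) / (m 0 : ℚ) + ∑ i : Fin n, (1 : ℚ) / (m i.succ : ℚ) := by
          rw [hsum, Fin.sum_univ_succ]
        simp only [Fin.tail]
        rw [this, hm0]
        ring
      · rintro m ⟨⟨-, -, -⟩, hm0⟩ m' ⟨⟨-, -, -⟩, hm0'⟩ ht
        have : Fin.cons (m 0) (Fin.tail m) = Fin.cons (m' 0) (Fin.tail m') := by
          rw [ht, hm0, hm0']
        rwa [Fin.cons_self_tail, Fin.cons_self_tail] at this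

/-- Egyptian fractions: for a positive rational `q` and `n ≥ 1`, there are only
finitely many nondecreasing `n`-tuples of positive integers `m` with
`q = ∑ 1/m i`. -/
theorem egyptian_fraction_finite (q : ℚ) (hq : 0 < q) (n : ℕ) (hn : 0 < n) :
    {m : Fin n → ℕ | (∀ i, 0 < m i) ∧ Monotone m ∧
      q = ∑ i, (1 : ℚ) / (m i : ℚ)}.Finite := by
  exact egyptian_key n q
end

section
/- For each fixed positive integer r, there are only finitely many tuples (d, e_1, ..., e_r) of positive integers with e_1 ≥ e_2 ≥ ... ≥ e_r, each e_k dividing d, each e_k < d, and (e_1 + 1) + (e_2 + 1) + ... + (e_r + 1) = d + 1. -/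
/-!
Dividing `∑ e_k + (r - 1) = d` by `d` writes `1` as a sum of the `2r - 1` unit fractions
`1/(d/e_1), …, 1/(d/e_r), 1/d, …, 1/d`, and this list of denominators determines `(d, e)` once
`r ≥ 2` (for `r ≤ 1` there are no tuples at all). For a fixed number `n` of unit fractions and a
fixed `q`, there are finitely many solutions of `∑ 1/x_i = q`: some `x_j` is at most `n/q`, and
removing it leaves a solution with `n - 1` terms.
-/

open Finset

theorem exists_le_div_of_sum_one_div_eq {ι : Type*} [Fintype ι] [Nonempty ι] {x : ι → ℕ}
    {q : ℚ} (hx : ∀ i, 0 < x i) (hsum : ∑ i, (1 / x i : ℚ) = q) :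
    ∃ j, (x j : ℚ) ≤ Fintype.card ι / q := by
  have hq : 0 < q := hsum ▸ sum_pos (fun i _ => by have := hx i; positivity) univ_nonempty
  have hcard : (0 : ℚ) < Fintype.card ι := by exact_mod_cast Fintype.card_pos
  obtain ⟨j, -, hj⟩ := exists_le_of_sum_le (f := fun _ => q / Fintype.card ι)
    (g := fun i => (1 / x i : ℚ)) univ_nonempty
    (by rw [sum_const, card_univ, nsmul_eq_mul, mul_div_cancel₀ _ hcard.ne', hsum])
  have hxj : (0 : ℚ) < x j := by exact_mod_cast hx j
  refine ⟨j, ?_⟩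
  rw [div_le_div_iff₀ hcard hxj] at hj
  rw [le_div_iff₀ hq]
  linarith

theorem finite_setOf_sum_one_div_eq (n : ℕ) (q : ℚ) :
    {x : Fin n → ℕ | (∀ i, 0 < x i) ∧ ∑ i, (1 / x i : ℚ) = q}.Finite := by
  induction n generalizing q with
  | zero => exact Set.toFinite _
  | succ n ih =>
    refine Set.Finite.subset (s := ⋃ j : Fin (n + 1), ⋃ a ∈ range (⌈(n + 1) / q⌉₊ + 1),
      Fin.insertNth j a '' {y | (∀ i, 0 < y i) ∧ ∑ i, (1 / y i : ℚ) = q - 1 / a})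
      (Set.finite_iUnion fun j => (range _).finite_toSet.biUnion fun a _ => (ih _).image _) ?_
    rintro x ⟨hx, hsum⟩
    obtain ⟨j, hj⟩ := exists_le_div_of_sum_one_div_eq hx hsum
    refine Set.mem_iUnion.2 ⟨j, Set.mem_biUnion (x := x j) ?_
      ⟨j.removeNth x, ⟨fun i => hx _, ?_⟩, Fin.insertNth_self_removeNth j x⟩⟩
    · rw [Finset.coe_range, Set.mem_Iio, Nat.lt_succ_iff]
      exact Nat.cast_le.1 (hj.trans (by simpa using Nat.le_ceil _))
    · rw [← hsum, Fin.sum_univ_succAbove _ j]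
      simp [Fin.removeNth]

def unitFractionTuple {r : ℕ} (m d : ℕ) (e : Fin r → ℕ) : Fin (r + m) → ℕ :=
  Fin.append (fun k => d / e k) fun _ => d

theorem unitFractionTuple_pos {r m d : ℕ} {e : Fin r → ℕ} (hd : 0 < d) (hdvd : ∀ k, e k ∣ d)
    (i : Fin (r + m)) : 0 < unitFractionTuple m d e i := by
  refine Fin.addCases (fun k => ?_) (fun _ => ?_) i
  · have hek : 0 < e k := Nat.pos_of_dvd_of_pos (hdvd k) hd
    simpa [unitFractionTuple] using Nat.div_pos (Nat.le_of_dvd hd (hdvd k)) hek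
  · simpa [unitFractionTuple] using hd

theorem sum_one_div_unitFractionTuple {r m d : ℕ} {e : Fin r → ℕ} (hd : 0 < d)
    (hdvd : ∀ k, e k ∣ d) (hsum : ∑ k, e k + m = d) :
    ∑ i, (1 / unitFractionTuple m d e i : ℚ) = 1 := by
  have hd' : (d : ℚ) ≠ 0 := by exact_mod_cast hd.ne'
  have hterm : ∀ k, (1 / (d / e k : ℕ) : ℚ) = e k / d := fun k => by
    rw [Nat.cast_div (hdvd k) (by exact_mod_cast (Nat.pos_of_dvd_of_pos (hdvd k) hd).ne'),
      one_div_div]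
  simp only [unitFractionTuple, Fin.sum_univ_add, Fin.append_left, Fin.append_right, hterm,
    sum_const, card_univ, Fintype.card_fin, nsmul_eq_mul]
  rw [← sum_div, mul_one_div, ← add_div, div_eq_one_iff_eq hd']
  exact_mod_cast hsum

theorem unitFractionTuple_injOn (r m : ℕ) :
    Set.InjOn (fun de : ℕ × (Fin r → ℕ) => unitFractionTuple (m + 1) de.1 de.2)
      {de | 0 < de.1 ∧ ∀ k, de.2 k ∣ de.1} := by
  rintro ⟨d, e⟩ ⟨hd, hdvd⟩ ⟨d', e'⟩ ⟨-, hdvd'⟩ h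
  obtain rfl : d = d' := by simpa [unitFractionTuple] using congrFun h (Fin.natAdd r 0)
  refine Prod.ext rfl (funext fun k => ?_)
  have hk : d / e k = d / e' k := by
    simpa [unitFractionTuple] using congrFun h (Fin.castAdd (m + 1) k)
  rw [← Nat.div_div_self (hdvd k) hd.ne', hk, Nat.div_div_self (hdvd' k) hd.ne']

theorem two_le_of_sum_add_one_eq {r d : ℕ} {e : Fin r → ℕ} (hlt : ∀ k, e k < d)
    (hsum : ∑ k, (e k + 1) = d + 1) : 2 ≤ r := by
  by_contra! hr
  interval_cases r
  · simp at hsum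
  · simp only [Fin.sum_univ_one, Nat.add_right_cancel_iff] at hsum
    exact (hlt 0).ne hsum

theorem neat_canonical_forms_finite_general (r : ℕ) :
    {de : ℕ × (Fin r → ℕ) | (∀ k, 0 < de.2 k) ∧ Antitone de.2 ∧
      (∀ k, de.2 k ∣ de.1) ∧ (∀ k, de.2 k < de.1) ∧
      (∑ k, (de.2 k + 1)) = de.1 + 1}.Finite := by
  rcases Nat.lt_or_ge r 2 with hr | hr
  · refine Set.finite_empty.subset ?_
    rintro de ⟨-, -, -, hlt, hsum⟩
    exact hr.not_ge (two_le_of_sum_add_one_eq hlt hsum)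
  obtain ⟨m, rfl⟩ : ∃ m, r = m + 1 + 1 := ⟨r - 2, by omega⟩
  refine Set.Finite.of_finite_image ((finite_setOf_sum_one_div_eq _ 1).subset ?_)
    ((unitFractionTuple_injOn _ m).mono ?_)
  · rintro _ ⟨⟨d, e⟩, ⟨-, -, hdvd, hlt, hsum⟩, rfl⟩
    have hd : 0 < d := Nat.zero_lt_of_lt (hlt 0)
    simp only [sum_add_distrib, sum_const, card_univ, Fintype.card_fin, smul_eq_mul,
      mul_one] at hsum
    exact ⟨unitFractionTuple_pos hd hdvd,
      sum_one_div_unitFractionTuple (e := e) hd hdvd (by omega)⟩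
  · rintro ⟨d, e⟩ ⟨-, -, hdvd, hlt, -⟩
    exact ⟨Nat.zero_lt_of_lt (hlt 0), hdvd⟩

/-- For each fixed `r ≥ 1`, there are only finitely many tuples `(d, e₁, …, e_r)`
of positive integers with `e₁ ≥ ⋯ ≥ e_r`, each `e_k ∣ d`, each `e_k < d`, and
`∑ (e_k + 1) = d + 1`. -/
theorem neat_canonical_forms_finite (r : ℕ) (hr : 0 < r) :
    {de : ℕ × (Fin r → ℕ) | (∀ k, 0 < de.2 k) ∧ Antitone de.2 ∧
      (∀ k, de.2 k ∣ de.1) ∧ (∀ k, de.2 k < de.1) ∧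
      (∑ k, (de.2 k + 1)) = de.1 + 1}.Finite :=
  neat_canonical_forms_finite_general r
end

section
/- For a positive integer d, define s(d) as the number of positive integers e < d such that e divides d and e+1 divides d+1. If d = 2^r - 1, then s(d) = τ(r) - 1, where τ(r) is the number of divisors of r. -/
/-!
If `e ∣ p ^ r - 1` and `e + 1 ∣ p ^ r` for a prime `p`, then `e + 1 = p ^ t`, and
`p ^ t - 1 ∣ p ^ r - 1 ↔ t ∣ r` (the remainder of `p ^ r - 1` modulo `p ^ t - 1` is
`p ^ (r % t) - 1`). So `t ↦ p ^ t - 1` maps the proper divisors of `r` bijectively onto the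
numbers counted by `sCount (p ^ r - 1)`, the condition `0 < e` excluding `t = 0`.
-/

/-- `sCount d` is the number of positive integers `e < d` with `e ∣ d` and
`(e+1) ∣ (d+1)`. -/
def sCount (d : ℕ) : ℕ :=
  ((Finset.range d).filter fun e => 0 < e ∧ e ∣ d ∧ (e + 1) ∣ (d + 1)).card

namespace Nat

theorem pow_sub_one_dvd_pow_sub_one_iff {a : ℕ} (ha : 1 < a) {m n : ℕ} :
    a ^ m - 1 ∣ a ^ n - 1 ↔ m ∣ n := by
  refine ⟨fun h => ?_, pow_sub_one_dvd_pow_sub_one a⟩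
  rw [Nat.dvd_iff_mod_eq_zero, pow_sub_one_mod_pow_sub_one, Nat.sub_eq_zero_iff_le,
    ← pow_zero a, Nat.pow_le_pow_iff_right ha] at h
  exact Nat.dvd_of_mod_eq_zero (Nat.le_zero.1 h)

theorem pow_sub_one_injective {a : ℕ} (ha : 1 < a) : Function.Injective fun t => a ^ t - 1 :=
  fun s t hst => Nat.pow_right_injective ha <|
    Nat.sub_one_cancel (Nat.pow_pos (by omega)) (Nat.pow_pos (by omega)) hst

end Nat

open Finset

theorem sCount_filter_prime_pow_sub_one_eq_image {p r : ℕ} (hp : p.Prime) (hr : r ≠ 0) :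
    (range (p ^ r - 1)).filter (fun e => 0 < e ∧ e ∣ p ^ r - 1 ∧ e + 1 ∣ p ^ r - 1 + 1) =
      r.properDivisors.image fun t => p ^ t - 1 := by
  have hp1 := hp.one_lt
  have hpow : ∀ t, 1 ≤ p ^ t := fun t => Nat.one_le_pow t p hp.pos
  ext e
  simp only [mem_filter, mem_range, mem_image, Nat.mem_properDivisors,
    Nat.sub_add_cancel (hpow r)]
  constructor
  · rintro ⟨he_lt, he_pos, he_dvd, hsucc_dvd⟩
    obtain ⟨t, -, ht⟩ := (Nat.dvd_prime_pow hp).1 hsucc_dvd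
    obtain rfl : e = p ^ t - 1 := by omega
    refine ⟨t, ⟨(Nat.pow_sub_one_dvd_pow_sub_one_iff hp1).1 he_dvd, ?_⟩, rfl⟩
    exact (Nat.pow_lt_pow_iff_right hp1).1 (by omega)
  · rintro ⟨t, ⟨ht_dvd, ht_lt⟩, rfl⟩
    have ht_ne : t ≠ 0 := by rintro rfl; exact hr (Nat.eq_zero_of_zero_dvd ht_dvd)
    have := (Nat.pow_lt_pow_iff_right hp1).2 ht_lt
    have := Nat.one_lt_pow ht_ne hp1
    refine ⟨by omega, by omega, (Nat.pow_sub_one_dvd_pow_sub_one_iff hp1).2 ht_dvd, ?_⟩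
    rw [Nat.sub_add_cancel (hpow t)]
    exact Nat.pow_dvd_pow p ht_lt.le

theorem sCount_prime_pow_sub_one {p r : ℕ} (hp : p.Prime) (hr : r ≠ 0) :
    sCount (p ^ r - 1) = r.divisors.card - 1 := by
  rw [sCount, sCount_filter_prime_pow_sub_one_eq_image hp hr,
    card_image_of_injective _ (Nat.pow_sub_one_injective hp.one_lt),
    ← Nat.cons_self_properDivisors hr, card_cons, Nat.add_sub_cancel]

/-- If `d = 2^r - 1`, then `s(d) = τ(r) - 1`, where `τ(r)` is the number of
divisors of `r`. -/
theorem sCount_two_pow_sub_one (r : ℕ) (hr : 0 < r) :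
    sCount (2 ^ r - 1) = r.divisors.card - 1 :=
  sCount_prime_pow_sub_one Nat.prime_two hr.ne'
end

section
/- For a positive integer d, define s(d) as the number of positive integers e < d with e | d and (e+1) | (d+1). Then s(d^2 + 2d) ≥ s(d) + 1 for every d ≥ 1. Consequently, the sequence s(d) is unbounded. -/
lemma sCount_step (d : ℕ) (hd : 1 ≤ d) :
    sCount d + 1 ≤ sCount (d ^ 2 + 2 * d) := by
  classical
  have hdD : d < d ^ 2 + 2 * d := by nlinarith
  have hDsucc : d ^ 2 + 2 * d + 1 = (d + 1) ^ 2 := by ring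
  have hdvdD : d ∣ d ^ 2 + 2 * d := ⟨d + 2, by ring⟩
  have hsub : insert d ((Finset.range d).filter
      fun e => 0 < e ∧ e ∣ d ∧ (e + 1) ∣ (d + 1)) ⊆
      (Finset.range (d ^ 2 + 2 * d)).filter
        fun e => 0 < e ∧ e ∣ d ^ 2 + 2 * d ∧ (e + 1) ∣ (d ^ 2 + 2 * d + 1) := by
    intro x hx
    simp only [Finset.mem_insert, Finset.mem_filter, Finset.mem_range] at hx ⊢
    rcases hx with rfl | ⟨hlt, hpos, hdvd, hdvd1⟩
    · exact ⟨hdD, hd, hdvdD, hDsucc ▸ dvd_pow_self _ (by norm_num)⟩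
    · exact ⟨hlt.trans hdD, hpos, hdvd.trans hdvdD,
        hDsucc ▸ hdvd1.trans (dvd_pow_self _ (by norm_num))⟩
  have hcard := Finset.card_le_card hsub
  rwa [Finset.card_insert_of_notMem (by simp)] at hcard

/-- `s(d² + 2d) ≥ s(d) + 1` for every `d ≥ 1`; consequently `s` is unbounded. -/
theorem sCount_unbounded :
    (∀ d : ℕ, 1 ≤ d → sCount d + 1 ≤ sCount (d ^ 2 + 2 * d)) ∧
    (∀ M : ℕ, ∃ d : ℕ, M < sCount d) := by
  refine ⟨sCount_step, ?_⟩
  intro M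
  suffices h : ∃ d : ℕ, 1 ≤ d ∧ M < sCount d + 1 by
    obtain ⟨d, hd, hM⟩ := h
    exact ⟨d ^ 2 + 2 * d, lt_of_lt_of_le hM (sCount_step d hd)⟩
  induction M with
  | zero => exact ⟨1, le_refl 1, Nat.succ_pos _⟩
  | succ n ih =>
    obtain ⟨d, hd, hM⟩ := ih
    refine ⟨d ^ 2 + 2 * d, ?_, ?_⟩
    · nlinarith
    · have := sCount_step d hd
      omega
end

section
/- Define s(d) as the number of positive integers e < d with e | d and (e+1) | (d+1), and S(N) = s(1) + ... + s(N). Then S(N) = N + O(N^{1/2}); more precisely, N - N^{1/2} - O(N^{1/2}) ≤ S(N) ≤ N - N^{1/2} + O(log N). -/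
/-- `SBig N = s(1) + ⋯ + s(N)`. -/
def SBig (N : ℕ) : ℕ := ∑ d ∈ Finset.Icc 1 N, sCount d

/-!
For `0 < e < d`, the conditions `e ∣ d` and `e + 1 ∣ d + 1` together say `d ≡ e [MOD e(e+1)]`,
so counting the pairs `(d, e)` by `e` first gives `S(N) = ∑_{e ≥ 1} ⌊(N - e)/(e(e+1))⌋`, where only
`e ≤ ⌊√N⌋` contribute. Dropping the floors costs at most `2` per term, i.e. `O(√N)` in total, and
the telescoping sum `∑_{e ≤ r} 1/(e(e+1)) = 1 - 1/(r+1)` with `r = ⌊√N⌋` gives the main term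
`N - N/(r+1) = N - √N + O(1)`.
-/

open Finset

theorem Nat.dvd_and_succ_dvd_succ_iff {e d : ℕ} (h : e ≤ d) :
    e ∣ d ∧ e + 1 ∣ d + 1 ↔ e * (e + 1) ∣ d - e := by
  have h₁ : e ∣ d ↔ e ∣ d - e := (Nat.dvd_sub_iff_left h dvd_rfl).symm
  have h₂ : e + 1 ∣ d + 1 ↔ e + 1 ∣ d - e := by
    rw [← Nat.dvd_sub_iff_left (by omega : e + 1 ≤ d + 1) dvd_rfl, Nat.add_sub_add_right]
  rw [h₁, h₂]
  exact ⟨fun ⟨he, he₁⟩ => Nat.Coprime.mul_dvd_of_dvd_of_dvd (by simp) he he₁,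
    fun h' => ⟨dvd_of_mul_right_dvd h', dvd_of_mul_left_dvd h'⟩⟩

theorem Nat.card_Ioc_filter_dvd_sub (a n b : ℕ) : #{d ∈ Ioc a n | b ∣ d - a} = (n - a) / b := by
  rw [← Nat.Ioc_filter_dvd_card_eq_div]
  rcases le_total a n with h | h
  · have : Ioc a n = (Ioc 0 (n - a)).map (addRightEmbedding a) := by simp [h]
    rw [this, filter_map, card_map]
    simp
  · simp [Nat.sub_eq_zero_of_le h, Ioc_eq_empty_of_le h]

theorem SBig_eq_sum_div (N : ℕ) :
    SBig N = ∑ e ∈ Icc 1 N, (N - e) / (e * (e + 1)) := by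
  have hswap : SBig N = ∑ e ∈ Icc 1 N, #{d ∈ Ioc e N | e * (e + 1) ∣ d - e} := by
    simp only [SBig, sCount, card_eq_sum_ones]
    refine sum_comm' fun d e => ?_
    simp only [mem_Icc, mem_filter, mem_range, mem_Ioc]
    constructor
    · rintro ⟨⟨-, hdN⟩, hed, he, hdiv⟩
      exact ⟨⟨⟨hed, hdN⟩, (Nat.dvd_and_succ_dvd_succ_iff hed.le).1 hdiv⟩, he, by omega⟩
    · rintro ⟨⟨⟨hed, hdN⟩, hdiv⟩, he, -⟩
      exact ⟨⟨by omega, hdN⟩, hed, he, (Nat.dvd_and_succ_dvd_succ_iff hed.le).2 hdiv⟩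
  rw [hswap]
  exact sum_congr rfl fun e _ => Nat.card_Ioc_filter_dvd_sub e N _

theorem Nat.sub_div_mul_succ_eq_zero_of_sqrt_lt {N e : ℕ} (h : Nat.sqrt N < e) :
    (N - e) / (e * (e + 1)) = 0 := by
  have : N < e * e := Nat.sqrt_lt.1 h
  exact Nat.div_eq_of_lt (by rw [Nat.mul_succ]; omega)

theorem SBig_eq_sum_div_sqrt (N : ℕ) :
    SBig N = ∑ e ∈ Icc 1 (Nat.sqrt N), (N - e) / (e * (e + 1)) := by
  rw [SBig_eq_sum_div]
  refine (sum_subset (Icc_subset_Icc_right (Nat.sqrt_le_self N)) fun e _ he => ?_).symm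
  exact Nat.sub_div_mul_succ_eq_zero_of_sqrt_lt (by simp_all)

theorem Nat.cast_sub_div_le (n e b : ℕ) : (((n - e) / b : ℕ) : ℝ) ≤ n / b :=
  (Nat.cast_div_le).trans (by gcongr; exact_mod_cast Nat.sub_le n e)

theorem Nat.div_sub_two_le_cast_sub_div {n e b : ℕ} (h : e ≤ b) :
    (n : ℝ) / b - 2 ≤ (((n - e) / b : ℕ) : ℝ) := by
  rcases Nat.eq_zero_or_pos b with rfl | hb
  · simp
  have hfloor : ((n - e : ℕ) : ℝ) / b - 1 < (((n - e) / b : ℕ) : ℝ) := by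
    rw [← Nat.floor_div_eq_div (K := ℝ)]
    exact Nat.sub_one_lt_floor _
  have hsub : (n : ℝ) - b ≤ ((n - e : ℕ) : ℝ) := by
    have : n ≤ (n - e) + b := by omega
    rw [sub_le_iff_le_add]
    exact_mod_cast this
  have : (n : ℝ) / b - 1 ≤ ((n - e : ℕ) : ℝ) / b := by
    rw [← div_self (by positivity : (b : ℝ) ≠ 0), ← sub_div]
    gcongr
  linarith

theorem sum_Icc_div_mul_succ (x : ℝ) (r : ℕ) :
    ∑ e ∈ Icc 1 r, x / (e * (e + 1)) = x - x / (r + 1) := by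
  induction r with
  | zero => simp
  | succ r ih =>
    rw [sum_Icc_succ_top (by omega), ih]
    push_cast
    field_simp
    ring

theorem cast_SBig_eq_sum (N : ℕ) :
    (SBig N : ℝ) = ∑ e ∈ Icc 1 (Nat.sqrt N), (((N - e) / (e * (e + 1)) : ℕ) : ℝ) := by
  rw [SBig_eq_sum_div_sqrt, Nat.cast_sum]

theorem cast_SBig_le (N : ℕ) : (SBig N : ℝ) ≤ N - N / (Nat.sqrt N + 1) := by
  rw [cast_SBig_eq_sum, ← sum_Icc_div_mul_succ]
  refine sum_le_sum fun e _ => ?_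
  exact_mod_cast Nat.cast_sub_div_le N e (e * (e + 1))

theorem le_cast_SBig (N : ℕ) :
    N - N / (Nat.sqrt N + 1) - 2 * Nat.sqrt N ≤ (SBig N : ℝ) := by
  rw [cast_SBig_eq_sum, ← sum_Icc_div_mul_succ]
  calc ∑ e ∈ Icc 1 (Nat.sqrt N), (N : ℝ) / (e * (e + 1)) - 2 * Nat.sqrt N
      = ∑ e ∈ Icc 1 (Nat.sqrt N), ((N : ℝ) / (e * (e + 1)) - 2) := by simp [mul_comm]
    _ ≤ _ := sum_le_sum fun e _ => by
      exact_mod_cast Nat.div_sub_two_le_cast_sub_div (n := N) (Nat.le_mul_of_pos_right e e.succ_pos)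

theorem cast_SBig_le_sub_sqrt_add_one (N : ℕ) : (SBig N : ℝ) ≤ N - √N + 1 := by
  have h₁ := Real.nat_sqrt_le_real_sqrt (a := N)
  have h₂ := Real.mul_self_sqrt (Nat.cast_nonneg (α := ℝ) N)
  have : √N - 1 ≤ N / (Nat.sqrt N + 1) := by
    rw [le_div_iff₀ (by positivity)]
    nlinarith [Nat.cast_nonneg (α := ℝ) (Nat.sqrt N), Real.sqrt_nonneg N]
  linarith [cast_SBig_le N]

theorem sub_three_mul_sqrt_le_cast_SBig (N : ℕ) : (N : ℝ) - 3 * √N ≤ SBig N := by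
  have h₁ := Real.real_sqrt_lt_nat_sqrt_succ (a := N)
  have h₂ := Real.nat_sqrt_le_real_sqrt (a := N)
  have h₃ := Real.mul_self_sqrt (Nat.cast_nonneg (α := ℝ) N)
  have : N / (Nat.sqrt N + 1) ≤ √N := by
    rw [div_le_iff₀ (by positivity)]
    nlinarith [Real.sqrt_nonneg N]
  linarith [le_cast_SBig N]

/-- `S(N) = N + O(N^{1/2})`; more precisely
`N - √N - O(√N) ≤ S(N) ≤ N - √N + O(log N)`. -/
theorem SBig_asymptotics :
    (∃ C : ℝ, 0 < C ∧ ∀ N : ℕ, 1 ≤ N →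
      |(SBig N : ℝ) - N| ≤ C * Real.sqrt N) ∧
    (∃ C : ℝ, 0 < C ∧ ∀ N : ℕ, 1 ≤ N →
      ((N : ℝ) - Real.sqrt N - C * Real.sqrt N ≤ (SBig N : ℝ)) ∧
      ((SBig N : ℝ) ≤ (N : ℝ) - Real.sqrt N + C * Real.log N)) := by
  have hlower := sub_three_mul_sqrt_le_cast_SBig
  have hupper := cast_SBig_le_sub_sqrt_add_one
  refine ⟨⟨3, by norm_num, fun N hN => abs_le.2 ⟨by linarith [hlower N], ?_⟩⟩,
    ⟨2, by norm_num, fun N hN => ⟨by linarith [hlower N], ?_⟩⟩⟩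
  · have : (1 : ℝ) ≤ √N := Real.one_le_sqrt.2 (by exact_mod_cast hN)
    linarith [hupper N]
  · obtain rfl | hN := hN.eq_or_lt
    · simp [show SBig 1 = 0 by decide]
    · have : Real.log 2 ≤ Real.log N := Real.log_le_log two_pos (by exact_mod_cast hN)
      linarith [hupper N, Real.log_two_gt_d9]
end

section
/- If k is a positive integer not divisible by 3 and n = 2^{2k}·3, then for every integer m with 0 ≤ m < n, n does not divide binomial(n+3, 4) - binomial(m+3, 4). -/
/-!
Since `24 * C(x + 3, 4) = q(x) ^ 2 - 1` with `q(x) = x ^ 2 + 3x + 1`, the hypothesis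
`n ∣ C(n + 3, 4) - C(m + 3, 4)` for `n = 3 * 4 ^ k` gives `9 * 2 ^ (2k + 3) ∣ q(n) ^ 2 - q(m) ^ 2`.

Both values of `q` are odd, so `4 ^ (k + 1)` divides `q(n) - q(m)` or `q(n) + q(m)`. As
`q(n) ≡ 1 + 4 ^ k` modulo `4 ^ (k + 1)`, this forces `m(m + 3) ≡ 4 ^ k` or `(m + 1)(m + 2) ≡ -4 ^ k`,
and with `m < n` only `m ∈ {4 ^ k - 3, 4 ^ k - 2, 3 * 4 ^ k - 1}` survive.

Modulo 9 we have `q(n) ≡ 1`, so `9 ∣ q(m) ^ 2 - 1`. But `4 ^ k ≡ 4` or `7` modulo 9 when `3 ∤ k`,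
and no candidate then satisfies this.
-/

def quad (x : ℤ) : ℤ := x ^ 2 + 3 * x + 1

lemma choose_add_three_four_mul_24 (j : ℕ) :
    ((j + 3).choose 4 : ℤ) * 24 = quad j ^ 2 - 1 := by
  have h : (j + 3).choose 4 * 24 = j * (j + 1) * (j + 2) * (j + 3) :=
    calc (j + 3).choose 4 * 24 = (j + 3).descFactorial 4 := by
          rw [Nat.descFactorial_eq_factorial_mul_choose, mul_comm]; rfl
      _ = j * (j + 1) * (j + 2) * (j + 3) := by simp [Nat.descFactorial_succ, mul_assoc]
  rw [quad]
  linear_combination (mod_cast h : ((j + 3).choose 4 * 24 : ℤ) = j * (j + 1) * (j + 2) * (j + 3))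

lemma odd_quad (x : ℤ) : Odd (quad x) := by
  obtain ⟨r, hr⟩ := Int.even_mul_succ_self x
  exact ⟨r + x, by rw [quad]; linear_combination hr⟩

lemma Int.two_pow_dvd_of_dvd_mul_odd {u y : ℤ} {e : ℕ} (hu : Odd u) (h : 2 ^ e ∣ u * y) :
    2 ^ e ∣ y :=
  (Int.isCoprime_two_left.mpr hu).pow_left.dvd_of_dvd_mul_left h

lemma Int.two_pow_dvd_or_of_dvd_mul_add_odd {x c : ℤ} {e : ℕ} (hc : Odd c)
    (h : 2 ^ e ∣ x * (x + c)) : 2 ^ e ∣ x ∨ 2 ^ e ∣ x + c := by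
  rcases Int.even_or_odd x with hx | hx
  · exact .inl (Int.two_pow_dvd_of_dvd_mul_odd (hx.add_odd hc) (mul_comm x _ ▸ h))
  · exact .inr (Int.two_pow_dvd_of_dvd_mul_odd hx h)

lemma Int.two_pow_dvd_sub_or_add_of_dvd_sq_sub_sq {a b : ℤ} {e : ℕ} (ha : Odd a) (hb : Odd b)
    (h : 2 ^ (e + 1) ∣ a ^ 2 - b ^ 2) : 2 ^ e ∣ a - b ∨ 2 ^ e ∣ a + b := by
  obtain ⟨u, hu⟩ := ha.sub_odd hb
  obtain ⟨v, hv⟩ := ha.add_odd hb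
  have huv : Odd (u + v) := by convert ha using 1; linarith
  rw [pow_succ'] at h
  rcases Int.even_or_odd u with hu' | hu'
  · have hv' : Odd v := by simpa using huv.sub_even hu'
    rw [show a ^ 2 - b ^ 2 = 2 * (v * (a - b)) by linear_combination (a - b) * hv,
      mul_dvd_mul_iff_left two_ne_zero] at h
    exact .inl (Int.two_pow_dvd_of_dvd_mul_odd hv' h)
  · rw [show a ^ 2 - b ^ 2 = 2 * (u * (a + b)) by linear_combination (a + b) * hu,
      mul_dvd_mul_iff_left two_ne_zero] at h
    exact .inr (Int.two_pow_dvd_of_dvd_mul_odd hu' h)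

lemma exists_eq_four_pow_mul_of_dvd {k : ℕ} (hk : 0 < k) {x c ε : ℤ} (hc : Odd c)
    (h : 4 ^ (k + 1) ∣ x * (x + c) - ε * 4 ^ k) :
    ∃ w, (x = 4 ^ k * w ∧ 4 ∣ w * c - ε) ∨ (x + c = 4 ^ k * w ∧ 4 ∣ w * c + ε) := by
  have h4 : (4 : ℤ) ^ k = 2 ^ (2 * k) := by rw [pow_mul]; norm_num
  have hs : (2 : ℤ) ^ (2 * k) ∣ x * (x + c) :=
    h4 ▸ (dvd_sub_left (dvd_mul_left _ _)).mp ((pow_dvd_pow 4 k.le_succ).trans h)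
  obtain ⟨j, rfl⟩ : ∃ j, k = j + 1 := ⟨k - 1, by omega⟩
  rw [pow_succ (4 : ℤ) (j + 1)] at h
  rcases Int.two_pow_dvd_or_of_dvd_mul_add_odd hc hs with hx | hx <;> rw [← h4] at hx <;>
    obtain ⟨w, hw⟩ := hx
  · refine ⟨w, .inl ⟨hw, ?_⟩⟩
    rw [hw, show 4 ^ (j + 1) * w * (4 ^ (j + 1) * w + c) - ε * 4 ^ (j + 1) =
      4 ^ (j + 1) * (w * c - ε + 4 * (4 ^ j * w ^ 2)) by ring,
      mul_dvd_mul_iff_left (by positivity)] at h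
    exact (dvd_add_left (dvd_mul_right 4 _)).mp h
  · refine ⟨w, .inr ⟨hw, ?_⟩⟩
    rw [eq_sub_of_add_eq hw,
      show (4 ^ (j + 1) * w - c) * (4 ^ (j + 1) * w - c + c) - ε * 4 ^ (j + 1) =
        4 ^ (j + 1) * (-(w * c + ε) + 4 * (4 ^ j * w ^ 2)) by ring,
      mul_dvd_mul_iff_left (by positivity)] at h
    exact dvd_neg.mp ((dvd_add_left (dvd_mul_right 4 _)).mp h)

lemma four_pow_succ_dvd_quad_three_mul_four_pow {k : ℕ} (hk : 0 < k) :
    (4 : ℤ) ^ (k + 1) ∣ quad (3 * 4 ^ k) - 1 - 4 ^ k := by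
  obtain ⟨j, rfl⟩ : ∃ j, k = j + 1 := ⟨k - 1, by omega⟩
  exact ⟨9 * 4 ^ j + 2, by rw [quad]; ring⟩

lemma eq_of_two_pow_dvd_quad_sq_sub_quad_sq {k : ℕ} (hk : 0 < k) {m : ℤ} (hm0 : 0 ≤ m)
    (hm : m < 3 * 4 ^ k) (h : (2 : ℤ) ^ (2 * k + 3) ∣ quad (3 * 4 ^ k) ^ 2 - quad m ^ 2) :
    m + 3 = 4 ^ k ∨ m + 2 = 4 ^ k ∨ m + 1 = 3 * 4 ^ k := by
  have hs : (4 : ℤ) ≤ 4 ^ k := le_self_pow₀ (by norm_num) hk.ne'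
  have hn := four_pow_succ_dvd_quad_three_mul_four_pow hk
  rcases Int.two_pow_dvd_sub_or_add_of_dvd_sq_sub_sq (e := 2 * k + 2) (odd_quad _) (odd_quad _) h
    with h | h <;>
    rw [show 2 * k + 2 = 2 * (k + 1) by ring, pow_mul, show (2 : ℤ) ^ 2 = 4 by norm_num] at h
  · have hm' : (4 : ℤ) ^ (k + 1) ∣ m * (m + 3) - 1 * 4 ^ k :=
      (dvd_sub hn h).trans (dvd_of_eq (by simp only [quad]; ring))
    obtain ⟨w, ⟨hw, hw4⟩ | ⟨hw, hw4⟩⟩ := exists_eq_four_pow_mul_of_dvd hk (by decide) hm'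
    · have : 0 ≤ w := by nlinarith
      have : w < 3 := by nlinarith
      omega
    · have : 0 ≤ w := by nlinarith
      have : w < 4 := by nlinarith
      obtain rfl : w = 1 := by omega
      exact .inl (by linarith)
  · have hm' : (4 : ℤ) ^ (k + 1) ∣ (m + 1) * (m + 1 + 1) - (-1) * 4 ^ k :=
      (dvd_sub h hn).trans (dvd_of_eq (by simp only [quad]; ring))
    obtain ⟨w, ⟨hw, hw4⟩ | ⟨hw, hw4⟩⟩ := exists_eq_four_pow_mul_of_dvd hk (by decide) hm'
    · have : 0 ≤ w := by nlinarith
      have : w < 4 := by nlinarith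
      obtain rfl : w = 3 := by omega
      exact .inr (.inr (by linarith))
    · have : 0 ≤ w := by nlinarith
      have : w < 4 := by nlinarith
      obtain rfl : w = 1 := by omega
      exact .inr (.inl (by linarith))

lemma four_pow_zmod_nine {k : ℕ} (h3 : ¬ 3 ∣ k) :
    (4 : ZMod 9) ^ k = 4 ∨ (4 : ZMod 9) ^ k = 7 := by
  rw [← Nat.div_add_mod k 3, pow_add, pow_mul, show (4 : ZMod 9) ^ 3 = 1 by decide, one_pow,
    one_mul]
  rcases (by omega : k % 3 = 1 ∨ k % 3 = 2) with h | h <;> rw [h] <;> decide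

lemma not_dvd_quad_sq_sub_one {k : ℕ} (h3 : ¬ 3 ∣ k) {m : ℤ}
    (hm : m + 3 = 4 ^ k ∨ m + 2 = 4 ^ k ∨ m + 1 = 3 * 4 ^ k) : ¬ (9 : ℤ) ∣ quad m ^ 2 - 1 := by
  intro h
  have h0 := (ZMod.intCast_zmod_eq_zero_iff_dvd _ 9).mpr (mod_cast h)
  have hm9 : (m : ZMod 9) = 4 ^ k - 3 ∨ (m : ZMod 9) = 4 ^ k - 2 ∨
      (m : ZMod 9) = 3 * 4 ^ k - 1 := by
    refine hm.imp (fun h => ?_) (Or.imp (fun h => ?_) fun h => ?_) <;>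
      exact eq_sub_of_add_eq (by exact_mod_cast congrArg (Int.cast : ℤ → ZMod 9) h)
  push_cast [quad] at h0
  rcases four_pow_zmod_nine h3 with h4 | h4 <;> rw [h4] at hm9 <;>
    rcases hm9 with hm9 | hm9 | hm9 <;> rw [hm9] at h0 <;> revert h0 <;> decide

/-- If `3 ∤ k`, `k ≥ 1`, and `n = 2^(2k)·3`, then for every `m < n`,
`n ∤ C(n+3,4) - C(m+3,4)`. -/
theorem reichstein_obstruction_pow (k : ℕ) (hk : 0 < k) (h3 : ¬ 3 ∣ k) :
    ∀ m : ℕ, m < 2 ^ (2 * k) * 3 →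
      ¬ ((2 ^ (2 * k) * 3 : ℤ) ∣
        ((2 ^ (2 * k) * 3 + 3).choose 4 : ℤ) - ((m + 3).choose 4 : ℤ)) := by
  intro m hm hdvd
  have hn : ((2 ^ (2 * k) * 3 : ℕ) : ℤ) = 3 * 4 ^ k := by push_cast; rw [pow_mul]; ring
  have h24 := mul_dvd_mul_right hdvd 24
  rw [sub_mul, choose_add_three_four_mul_24, choose_add_three_four_mul_24, hn,
    sub_sub_sub_cancel_right] at h24
  have h9 : (9 : ℤ) ∣ quad m ^ 2 - 1 := by
    have hn9 : (9 : ℤ) ∣ quad (3 * 4 ^ k) ^ 2 - 1 :=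
      ⟨4 ^ k * (4 ^ k + 1) * (9 * 4 ^ k * (4 ^ k + 1) + 2), by rw [quad]; ring⟩
    simpa only [sub_sub_sub_cancel_left] using
      dvd_sub hn9 ((Dvd.intro (2 ^ (2 * k) * 8) (by ring)).trans h24)
  exact not_dvd_quad_sq_sub_one h3 (eq_of_two_pow_dvd_quad_sq_sub_quad_sq hk (by positivity)
    (by rw [← hn]; exact_mod_cast hm) ((Dvd.intro 9 (by ring)).trans h24)) h9
end

section
/- Suppose a binary form p of degree d over ℂ has two representations p = Σ_{i=1}^m (α_i x + β_i y)^d = Σ_{j=1}^n (γ_j x + δ_j y)^d, where the m + n linear forms α_i x + β_i y and γ_j x + δ_j y are pairwise non-proportional within each sum, and m + n ≤ d + 1. Then m = n and the two families of d-th powers agree up to permutation. -/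
open Polynomial in
private lemma key_indep (d : ℕ) (T : Finset ℂ) (c : ℂ → ℂ) (hT : T.card ≤ d + 1)
    (h : ∑ v ∈ T, C (c v) * (X + C v) ^ d = 0) :
    ∀ w ∈ T, c w = 0 := by
  classical
  have hpow : ∀ j ≤ d, ∑ v ∈ T, c v * v ^ j = 0 := by
    intro j hj
    have h0 := congrArg (fun p => Polynomial.coeff p (d - j)) h
    simp only [finset_sum_coeff, coeff_C_mul, coeff_X_add_C_pow, coeff_zero] at h0
    have hdj : d - (d - j) = j := Nat.sub_sub_self hj
    rw [hdj] at h0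
    have hch : ((d.choose (d - j) : ℂ)) ≠ 0 := by
      exact_mod_cast (Nat.choose_pos (Nat.sub_le d j)).ne'
    have h1 : (∑ v ∈ T, c v * v ^ j) * (d.choose (d - j) : ℂ) = 0 := by
      rw [Finset.sum_mul, ← h0]
      exact Finset.sum_congr rfl fun v _ => by ring
    exact (mul_eq_zero.mp h1).resolve_right hch
  intro w hw
  set P : Polynomial ℂ := ∏ v ∈ T.erase w, (X - C v) with hP
  have hdeg : P.natDegree < d + 1 := by
    have h1 : P.natDegree ≤ ∑ v ∈ T.erase w, (X - C v).natDegree :=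
      Polynomial.natDegree_prod_le (T.erase w) _
    have h2 : ∑ v ∈ T.erase w, (X - C v).natDegree = (T.erase w).card := by
      simp [Polynomial.natDegree_X_sub_C]
    have h3 := Finset.card_erase_of_mem hw
    omega
  have hsum : ∑ v ∈ T, c v * P.eval v = 0 := by
    have key : ∀ v ∈ T, c v * P.eval v
        = ∑ j ∈ Finset.range (d + 1), P.coeff j * (c v * v ^ j) := by
      intro v _
      rw [Polynomial.eval_eq_sum_range' hdeg, Finset.mul_sum]
      exact Finset.sum_congr rfl fun j _ => by ring
    rw [Finset.sum_congr rfl key, Finset.sum_comm]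
    apply Finset.sum_eq_zero
    intro j hj
    rw [← Finset.mul_sum, hpow j (Nat.lt_succ_iff.mp (Finset.mem_range.mp hj)), mul_zero]
  have hsingle : ∑ v ∈ T, c v * P.eval v = c w * P.eval w := by
    apply Finset.sum_eq_single_of_mem w hw
    intro v hv hvw
    have hz : P.eval v = 0 := by
      rw [hP, Polynomial.eval_prod]
      apply Finset.prod_eq_zero (Finset.mem_erase.mpr ⟨hvw, hv⟩)
      simp
    rw [hz, mul_zero]
  have hPw : P.eval w ≠ 0 := by
    rw [hP, Polynomial.eval_prod, Finset.prod_ne_zero_iff]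
    intro v hv
    simp only [Polynomial.eval_sub, Polynomial.eval_X, Polynomial.eval_C]
    exact sub_ne_zero_of_ne (Finset.ne_of_mem_erase hv).symm
  rw [hsum] at hsingle
  exact (mul_eq_zero.mp hsingle.symm).resolve_right hPw

open Polynomial in
private lemma form_eval (a b c : ℂ) (h : c * a + b ≠ 0) :
    C a * (C c * X + 1) + C b * X
      = C (c * a + b) * (X + C (a / (c * a + b))) := by
  have h1 : (c * a + b) * (a / (c * a + b)) = a := by
    rw [mul_comm, div_mul_cancel₀ a h]
  have h2 : Polynomial.C (c * a + b) * Polynomial.C (a / (c * a + b)) = Polynomial.C a := by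
    rw [← Polynomial.C_mul, h1]
  conv_rhs => rw [mul_add, h2]
  simp only [Polynomial.C_add, Polynomial.C_mul]
  ring

open MvPolynomial in
/-- If a binary `d`-ic has two representations as sums of `m` resp. `n` `d`-th
powers of nonzero linear forms, pairwise non-proportional within each sum, and
`m + n ≤ d + 1`, then `m = n` and the families of powers agree up to a
permutation. -/
theorem length_lemma (d m n : ℕ)
    (α β : Fin m → ℂ) (γ δ : Fin n → ℂ)
    (hαβ : ∀ i, (α i, β i) ≠ (0, 0))
    (hγδ : ∀ j, (γ j, δ j) ≠ (0, 0))
    (honest₁ : ∀ i j : Fin m, i ≠ j → α i * β j ≠ α j * β i)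
    (honest₂ : ∀ i j : Fin n, i ≠ j → γ i * δ j ≠ γ j * δ i)
    (hmn : m + n ≤ d + 1)
    (heq : (∑ i : Fin m, (C (α i) * X 0 + C (β i) * X 1 : MvPolynomial (Fin 2) ℂ) ^ d) =
      ∑ j : Fin n, (C (γ j) * X 0 + C (δ j) * X 1 : MvPolynomial (Fin 2) ℂ) ^ d) :
    ∃ σ : Fin m ≃ Fin n, ∀ i : Fin m,
      (C (α i) * X 0 + C (β i) * X 1 : MvPolynomial (Fin 2) ℂ) ^ d =
        (C (γ (σ i)) * X 0 + C (δ (σ i)) * X 1 : MvPolynomial (Fin 2) ℂ) ^ d := by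
  classical
  -- choose a shift `c` making all the "β-parts" nonzero
  obtain ⟨c, hc₁, hc₂⟩ :
      ∃ c : ℂ, (∀ i, c * α i + β i ≠ 0) ∧ (∀ j, c * γ j + δ j ≠ 0) := by
    obtain ⟨c, hcS⟩ := Infinite.exists_notMem_finset
      ((Finset.univ.image fun i => -β i / α i) ∪ (Finset.univ.image fun j => -δ j / γ j))
    refine ⟨c, fun i hz => ?_, fun j hz => ?_⟩
    · rcases eq_or_ne (α i) 0 with h0 | h0
      · exact hαβ i (by rw [h0] at hz ⊢; simp at hz; simp [h0, hz])
      · apply hcS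
        apply Finset.mem_union_left
        apply Finset.mem_image.mpr
        exact ⟨i, Finset.mem_univ i, by field_simp; linear_combination -hz⟩
    · rcases eq_or_ne (γ j) 0 with h0 | h0
      · exact hγδ j (by rw [h0] at hz ⊢; simp at hz; simp [h0, hz])
      · apply hcS
        apply Finset.mem_union_right
        apply Finset.mem_image.mpr
        exact ⟨j, Finset.mem_univ j, by field_simp; linear_combination -hz⟩
  set β' : Fin m → ℂ := fun i => c * α i + β i with hβ'def
  set δ' : Fin n → ℂ := fun j => c * γ j + δ j with hδ'def
  set t : Fin m → ℂ := fun i => α i / β' i with htdef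
  set u : Fin n → ℂ := fun j => γ j / δ' j with hudef
  have hβ' : ∀ i, β' i ≠ 0 := hc₁
  have hδ' : ∀ j, δ' j ≠ 0 := hc₂
  have htinj : Function.Injective t := by
    intro i j hij
    by_contra hne
    apply honest₁ i j hne
    have h2 : α i * β' j = α j * β' i := (div_eq_div_iff (hβ' i) (hβ' j)).mp hij
    simp only [hβ'def] at h2
    linear_combination h2
  have huinj : Function.Injective u := by
    intro i j hij
    by_contra hne
    apply honest₂ i j hne
    have h2 : γ i * δ' j = γ j * δ' i := (div_eq_div_iff (hδ' i) (hδ' j)).mp hij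
    simp only [hδ'def] at h2
    linear_combination h2
  -- transform the equation into one-variable polynomials
  set Φ : MvPolynomial (Fin 2) ℂ →ₐ[ℂ] Polynomial ℂ :=
    MvPolynomial.aeval ![Polynomial.C c * Polynomial.X + 1, Polynomial.X] with hΦdef
  have hterm : ∀ a b : ℂ, c * a + b ≠ 0 →
      Φ ((C a * X 0 + C b * X 1) ^ d)
        = Polynomial.C ((c * a + b) ^ d)
            * (Polynomial.X + Polynomial.C (a / (c * a + b))) ^ d := by
    intro a b hab
    rw [map_pow, map_add, map_mul, map_mul]
    have hXa : Φ (X 0) = Polynomial.C c * Polynomial.X + 1 := by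
      simp [hΦdef]
    have hXb : Φ (X 1) = Polynomial.X := by simp [hΦdef]
    have hCa : Φ (C a) = Polynomial.C a := by simp [hΦdef, Polynomial.algebraMap_eq]
    have hCb : Φ (C b) = Polynomial.C b := by simp [hΦdef, Polynomial.algebraMap_eq]
    rw [hXa, hXb, hCa, hCb, form_eval a b c hab, mul_pow, ← Polynomial.C_pow]
  have E : (∑ i : Fin m, Polynomial.C ((β' i) ^ d)
        * (Polynomial.X + Polynomial.C (t i)) ^ d)
      = ∑ j : Fin n, Polynomial.C ((δ' j) ^ d)
        * (Polynomial.X + Polynomial.C (u j)) ^ d := by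
    have h0 := congrArg Φ heq
    rw [map_sum, map_sum] at h0
    calc (∑ i : Fin m, Polynomial.C ((β' i) ^ d)
          * (Polynomial.X + Polynomial.C (t i)) ^ d)
        = ∑ i : Fin m, Φ ((C (α i) * X 0 + C (β i) * X 1) ^ d) := by
          exact Finset.sum_congr rfl fun i _ => (hterm (α i) (β i) (hβ' i)).symm
      _ = ∑ j : Fin n, Φ ((C (γ j) * X 0 + C (δ j) * X 1) ^ d) := h0
      _ = _ := Finset.sum_congr rfl fun j _ => hterm (γ j) (δ j) (hδ' j)
  -- fiberwise bookkeeping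
  set T : Finset ℂ := (Finset.univ.image t) ∪ (Finset.univ.image u) with hTdef
  have htmem : ∀ i, t i ∈ T := fun i =>
    Finset.mem_union_left _ (Finset.mem_image_of_mem t (Finset.mem_univ i))
  have humem : ∀ j, u j ∈ T := fun j =>
    Finset.mem_union_right _ (Finset.mem_image_of_mem u (Finset.mem_univ j))
  set A : ℂ → ℂ := fun v => ∑ i ∈ Finset.univ.filter (fun i => t i = v), (β' i) ^ d with hAdef
  set B : ℂ → ℂ := fun v => ∑ j ∈ Finset.univ.filter (fun j => u j = v), (δ' j) ^ d with hBdef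
  have hA : ∑ v ∈ T, Polynomial.C (A v) * (Polynomial.X + Polynomial.C v) ^ d
      = ∑ i : Fin m, Polynomial.C ((β' i) ^ d)
          * (Polynomial.X + Polynomial.C (t i)) ^ d := by
    rw [← Finset.sum_fiberwise_of_maps_to (fun i _ => htmem i)
      (fun i => Polynomial.C ((β' i) ^ d) * (Polynomial.X + Polynomial.C (t i)) ^ d)]
    apply Finset.sum_congr rfl
    intro v _
    rw [hAdef, map_sum, Finset.sum_mul]
    apply Finset.sum_congr rfl
    intro i hi
    rw [(Finset.mem_filter.mp hi).2]
  have hB : ∑ v ∈ T, Polynomial.C (B v) * (Polynomial.X + Polynomial.C v) ^ d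
      = ∑ j : Fin n, Polynomial.C ((δ' j) ^ d)
          * (Polynomial.X + Polynomial.C (u j)) ^ d := by
    rw [← Finset.sum_fiberwise_of_maps_to (fun j _ => humem j)
      (fun j => Polynomial.C ((δ' j) ^ d) * (Polynomial.X + Polynomial.C (u j)) ^ d)]
    apply Finset.sum_congr rfl
    intro v _
    rw [hBdef, map_sum, Finset.sum_mul]
    apply Finset.sum_congr rfl
    intro j hj
    rw [(Finset.mem_filter.mp hj).2]
  have hTcard : T.card ≤ d + 1 := by
    calc T.card ≤ (Finset.univ.image t).card + (Finset.univ.image u).card :=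
          Finset.card_union_le _ _
      _ ≤ m + n := by
          have h1 := Finset.card_image_le (s := (Finset.univ : Finset (Fin m))) (f := t)
          have h2 := Finset.card_image_le (s := (Finset.univ : Finset (Fin n))) (f := u)
          simp only [Finset.card_univ, Fintype.card_fin] at h1 h2
          omega
      _ ≤ d + 1 := hmn
  have hzero : ∑ v ∈ T, Polynomial.C (A v - B v) * (Polynomial.X + Polynomial.C v) ^ d = 0 := by
    simp only [Polynomial.C_sub, sub_mul]
    rw [Finset.sum_sub_distrib, hA, hB, E, sub_self]
  have hAB : ∀ v ∈ T, A v = B v := by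
    intro v hv
    have h := key_indep d T (fun v => A v - B v) hTcard hzero v hv
    exact sub_eq_zero.mp h
  -- matching
  have hfilt : ∀ i : Fin m, Finset.univ.filter (fun i' => t i' = t i) = {i} := by
    intro i
    apply Finset.eq_singleton_iff_unique_mem.mpr
    refine ⟨Finset.mem_filter.mpr ⟨Finset.mem_univ i, rfl⟩, fun j hj => ?_⟩
    exact htinj (Finset.mem_filter.mp hj).2
  have hfiltu : ∀ j : Fin n, Finset.univ.filter (fun j' => u j' = u j) = {j} := by
    intro j
    apply Finset.eq_singleton_iff_unique_mem.mpr
    refine ⟨Finset.mem_filter.mpr ⟨Finset.mem_univ j, rfl⟩, fun i hi => ?_⟩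
    exact huinj (Finset.mem_filter.mp hi).2
  have match1 : ∀ i : Fin m, ∃ j : Fin n, u j = t i ∧ (β' i) ^ d = (δ' j) ^ d := by
    intro i
    have hAi : A (t i) = (β' i) ^ d := by rw [hAdef]; simp only; rw [hfilt i, Finset.sum_singleton]
    have hBi := hAB (t i) (htmem i)
    rw [hAi] at hBi
    have hne : (Finset.univ.filter (fun j => u j = t i)).Nonempty := by
      by_contra hempty
      rw [Finset.not_nonempty_iff_eq_empty] at hempty
      have : B (t i) = 0 := by rw [hBdef]; simp only; rw [hempty, Finset.sum_empty]
      rw [this] at hBi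
      exact pow_ne_zero d (hβ' i) hBi
    obtain ⟨j, hj⟩ := hne
    have hji : u j = t i := (Finset.mem_filter.mp hj).2
    refine ⟨j, hji, ?_⟩
    have : B (t i) = (δ' j) ^ d := by
      rw [hBdef]; simp only; rw [← hji, hfiltu j, Finset.sum_singleton]
    rw [hBi, this]
  have match2 : ∀ j : Fin n, ∃ i : Fin m, t i = u j ∧ (δ' j) ^ d = (β' i) ^ d := by
    intro j
    have hBj : B (u j) = (δ' j) ^ d := by rw [hBdef]; simp only; rw [hfiltu j, Finset.sum_singleton]
    have hAj := hAB (u j) (humem j)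
    rw [hBj] at hAj
    have hne : (Finset.univ.filter (fun i => t i = u j)).Nonempty := by
      by_contra hempty
      rw [Finset.not_nonempty_iff_eq_empty] at hempty
      have : A (u j) = 0 := by rw [hAdef]; simp only; rw [hempty, Finset.sum_empty]
      rw [this] at hAj
      exact pow_ne_zero d (hδ' j) hAj.symm
    obtain ⟨i, hi⟩ := hne
    have hij : t i = u j := (Finset.mem_filter.mp hi).2
    refine ⟨i, hij, ?_⟩
    have : A (u j) = (β' i) ^ d := by
      rw [hAdef]; simp only; rw [← hij, hfilt i, Finset.sum_singleton]
    rw [← hAj, this]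
  choose σ hσ hσd using match1
  choose τ hτ hτd using match2
  have hleft : Function.LeftInverse τ σ := by
    intro i
    apply htinj
    rw [hτ (σ i), hσ i]
  have hright : Function.RightInverse τ σ := by
    intro j
    apply huinj
    rw [hσ (τ j), hτ j]
  refine ⟨⟨σ, τ, hleft, hright⟩, fun i => ?_⟩
  -- final computation
  set j := σ i with hj
  have hji : u j = t i := hσ i
  have hbd : (β' i) ^ d = (δ' j) ^ d := hσd i
  set ζ : ℂ := δ' j / β' i with hζ
  have hζd : ζ ^ d = 1 := by
    rw [hζ, div_pow, ← hbd, div_self (pow_ne_zero d (hβ' i))]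
  have hcross : γ j * β' i = α i * δ' j := by
    have := (div_eq_div_iff (hδ' j) (hβ' i)).mp hji
    exact this
  have hγj : γ j = ζ * α i := by
    rw [hζ, div_mul_eq_mul_div, eq_div_iff (hβ' i)]
    linear_combination hcross
  have hδj : δ j = ζ * β i := by
    have h1 : δ' j = ζ * β' i := by
      rw [hζ, div_mul_cancel₀ _ (hβ' i)]
    have h2 : c * γ j + δ j = ζ * (c * α i + β i) := h1
    linear_combination h2 - c * hγj
  show _ = (C (γ j) * X 0 + C (δ j) * X 1 : MvPolynomial (Fin 2) ℂ) ^ d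
  rw [hγj, hδj]
  have : (C (ζ * α i) * X 0 + C (ζ * β i) * X 1 : MvPolynomial (Fin 2) ℂ)
      = C ζ * (C (α i) * X 0 + C (β i) * X 1) := by
    simp only [MvPolynomial.C_mul]
    ring
  rw [this, mul_pow, ← MvPolynomial.C_pow, hζd, MvPolynomial.C_1, one_mul]
end

section
/- If p is a nonzero homogeneous polynomial of degree d in n variables over ℂ, then there exists an n-tuple i = (i_1, ..., i_n) of nonnegative integers with i_1 + ... + i_n = d such that p(i_1, ..., i_n) ≠ 0. -/
/-!
If a form `p` of degree `d` vanishes at the lattice points of `{Σ i = d}`, substituting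
`yₙ = d - Σ_{k<n} y_k` gives a polynomial of total degree `≤ d` in `n - 1` variables vanishing
at all lattice points of the solid simplex `{Σ i ≤ d}`. Such a polynomial is zero: for a monomial
`x^μ` of maximal degree, the mixed forward difference `Δ^μ` at the origin only sees lattice
points `i ≤ μ`, yet it kills every other monomial of the polynomial and sends `x^μ` to `μ!`.
So `p` vanishes on the hyperplane `Σ y = d`; if `d ≠ 0`, homogeneity spreads this to every `y`
with `Σ y ≠ 0`, and a polynomial vanishing off a hyperplane is zero.
-/

open Finset

theorem Finsupp.exists_lt_of_degree_le_of_ne {σ : Type*} [Fintype σ] {m μ : σ →₀ ℕ}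
    (hdeg : m.degree ≤ μ.degree) (hne : m ≠ μ) : ∃ k, m k < μ k := by
  by_contra! hle
  rw [Finsupp.degree_eq_sum, Finsupp.degree_eq_sum] at hdeg
  have heq := (Finset.sum_eq_sum_iff_of_le fun k _ => hle k).1
    (le_antisymm (Finset.sum_le_sum fun k _ => hle k) hdeg)
  exact hne (Finsupp.ext fun k => (heq k (mem_univ k)).symm)

namespace MvPolynomial

section MixedFwdDiff

variable {R σ : Type*} [CommRing R] [Fintype σ] [DecidableEq σ]

/-- `Δ₁^{μ₁} ⋯ Δₙ^{μₙ} q` at the origin, written out by Newton's formula. -/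
noncomputable def mixedFwdDiff (μ : σ →₀ ℕ) (q : MvPolynomial σ R) : R :=
  ∑ i ∈ Fintype.piFinset fun k => range (μ k + 1),
    (∏ k, (-1) ^ (μ k - i k) * ((μ k).choose (i k) : R)) * eval (fun k => (i k : R)) q

theorem mixedFwdDiff_eq_sum_support (μ : σ →₀ ℕ) (q : MvPolynomial σ R) :
    mixedFwdDiff μ q =
      ∑ m ∈ q.support, coeff m q * ∏ k, (fwdDiff 1)^[μ k] (fun r : R => r ^ m k) 0 := by
  simp_rw [fwdDiff_iter_eq_sum_shift, prod_univ_sum, mul_sum, mixedFwdDiff, eval_eq', mul_sum]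
  rw [sum_comm]
  refine sum_congr rfl fun m _ => sum_congr rfl fun i _ => ?_
  push_cast [zsmul_eq_mul, nsmul_eq_mul, mul_one, zero_add, prod_mul_distrib]
  ring

theorem mixedFwdDiff_eq_coeff_mul_prod_factorial {μ : σ →₀ ℕ} {q : MvPolynomial σ R}
    (hq : q.totalDegree ≤ μ.degree) :
    mixedFwdDiff μ q = coeff μ q * ∏ k, ((μ k).factorial : R) := by
  rw [mixedFwdDiff_eq_sum_support, sum_eq_single μ]
  · simp_rw [fwdDiff_iter_eq_factorial, Pi.natCast_apply]
  · intro m hm hne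
    obtain ⟨k, hk⟩ := Finsupp.exists_lt_of_degree_le_of_ne ((le_totalDegree hm).trans hq) hne
    rw [prod_eq_zero (mem_univ k) (by rw [fwdDiff_iter_pow_eq_zero_of_lt hk, Pi.zero_apply]),
      mul_zero]
  · intro hμ
    rw [notMem_support_iff.1 hμ, zero_mul]

theorem eq_zero_of_eval_natCast_eq_zero_of_sum_le [IsDomain R] [CharZero R]
    {q : MvPolynomial σ R} {d : ℕ} (hq : q.totalDegree ≤ d)
    (h : ∀ i : σ → ℕ, ∑ k, i k ≤ d → eval (fun k => (i k : R)) q = 0) : q = 0 := by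
  by_contra hq0
  obtain ⟨μ, hμ, hμdeg⟩ :=
    q.support.exists_mem_eq_sup (support_nonempty.2 hq0) fun m => m.degree
  have hμdeg : q.totalDegree = μ.degree := hμdeg
  have hdiff : mixedFwdDiff μ q = 0 := sum_eq_zero fun i hi => by
    have hiμ : ∀ k, i k ≤ μ k := fun k =>
      Nat.lt_succ_iff.1 (mem_range.1 (Fintype.mem_piFinset.1 hi k))
    have hid : ∑ k, i k ≤ d := calc
      ∑ k, i k ≤ ∑ k, μ k := sum_le_sum fun k _ => hiμ k
      _ = q.totalDegree := by rw [hμdeg, μ.degree_eq_sum]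
      _ ≤ d := hq
    rw [h i hid, mul_zero]
  rw [mixedFwdDiff_eq_coeff_mul_prod_factorial hμdeg.le] at hdiff
  simp [mem_support_iff.1 hμ, prod_eq_zero_iff, Nat.factorial_ne_zero] at hdiff

end MixedFwdDiff

theorem totalDegree_bind₁_le {R σ τ : Type*} [CommSemiring R] {f : σ → MvPolynomial τ R}
    (hf : ∀ j, (f j).totalDegree ≤ 1) (p : MvPolynomial σ R) :
    (bind₁ f p).totalDegree ≤ p.totalDegree := by
  conv_lhs => rw [p.as_sum, map_sum]
  refine totalDegree_finsetSum_le fun m hm => ?_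
  rw [bind₁_monomial]
  calc (C (coeff m p) * ∏ j ∈ m.support, f j ^ m j).totalDegree
      ≤ ∑ j ∈ m.support, (f j ^ m j).totalDegree :=
        (totalDegree_mul _ _).trans
          (by rw [totalDegree_C, zero_add]; exact totalDegree_finsetProd _ _)
    _ ≤ ∑ j ∈ m.support, m j := sum_le_sum fun j _ =>
        (totalDegree_pow _ _).trans (by simpa using Nat.mul_le_mul_left (m j) (hf j))
    _ ≤ p.totalDegree := le_totalDegree hm

theorem eval_bind₁ {R σ τ : Type*} [CommSemiring R] (y : τ → R)
    (f : σ → MvPolynomial τ R) (p : MvPolynomial σ R) :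
    eval y (bind₁ f p) = eval (fun j => eval y (f j)) p :=
  aeval_bind₁ y f p

theorem eval_eq_zero_of_sum_eq_of_eval_natCast_eq_zero {R : Type*} [CommRing R] [IsDomain R]
    [CharZero R] {m d : ℕ} {p : MvPolynomial (Fin (m + 1)) R} (hp : p.totalDegree ≤ d)
    (h : ∀ i : Fin (m + 1) → ℕ, ∑ k, i k = d → eval (fun k => (i k : R)) p = 0)
    (y : Fin (m + 1) → R) (hy : ∑ k, y k = d) : eval y p = 0 := by
  set f : Fin (m + 1) → MvPolynomial (Fin m) R := Fin.snoc X (C (d : R) - ∑ k, X k)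
  have hf : ∀ j, (f j).totalDegree ≤ 1 := Fin.lastCases
    (by
      simp only [f, Fin.snoc_last]
      refine (totalDegree_sub _ _).trans (max_le (by rw [totalDegree_C]; omega) ?_)
      exact totalDegree_finsetSum_le fun k _ => (totalDegree_X k).le)
    fun k => by simp [f]
  have eval_f (x : Fin m → R) : (fun j => eval x (f j)) = Fin.snoc x (d - ∑ k, x k) :=
    _root_.funext (Fin.lastCases (by simp [f]) fun k => by simp [f])
  have hdehom : bind₁ f p = 0 := by
    refine eq_zero_of_eval_natCast_eq_zero_of_sum_le ((totalDegree_bind₁_le hf p).trans hp)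
      fun i hi => ?_
    rw [eval_bind₁, eval_f]
    convert h (Fin.snoc i (d - ∑ k, i k)) (by simp [Fin.sum_univ_castSucc]; omega) using 2
    exact congrArg eval (_root_.funext fun j => Fin.lastCases (by simp [Nat.cast_sub hi])
      (fun k => by simp) j)
  have hlast : (d : R) - ∑ k, Fin.init y k = y (Fin.last m) := by
    rw [← hy, Fin.sum_univ_castSucc, Fin.init_def, add_sub_cancel_left]
  have := congrArg (eval (Fin.init y)) hdehom
  rwa [eval_bind₁, eval_f, hlast, Fin.snoc_init_self, map_zero] at this

theorem IsHomogeneous.eval_smul {R σ : Type*} [CommSemiring R] [Fintype σ]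
    {p : MvPolynomial σ R} {d : ℕ} (hp : p.IsHomogeneous d) (c : R) (y : σ → R) :
    eval (c • y) p = c ^ d * eval y p := by
  rw [eval_eq', eval_eq', mul_sum]
  refine sum_congr rfl fun m hm => ?_
  have hmd : ∑ k, m k = d := by
    rw [← Finsupp.degree_eq_sum]; exact (hp.degree_eq_sum_deg_support hm).symm
  simp_rw [Pi.smul_apply, smul_eq_mul, mul_pow, prod_mul_distrib, prod_pow_eq_pow_sum, hmd]
  ring

theorem IsHomogeneous.eq_zero_of_eval_eq_zero_of_sum_eq {K σ : Type*} [Field K] [CharZero K]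
    [Fintype σ] [Nonempty σ] {p : MvPolynomial σ K} {d : ℕ} (hp : p.IsHomogeneous d)
    (hd : d ≠ 0) (h : ∀ y : σ → K, ∑ k, y k = d → eval y p = 0) : p = 0 := by
  have hmul : p * ∑ k, X k = 0 := MvPolynomial.funext fun y => by
    by_cases hy : ∑ k, y k = 0
    · simp [hy]
    have hc : (d : K) / ∑ k, y k ≠ 0 := div_ne_zero (Nat.cast_ne_zero.2 hd) hy
    have hscaled := h (((d : K) / ∑ k, y k) • y) (by
      simp only [Pi.smul_apply, smul_eq_mul, ← mul_sum, div_mul_cancel₀ _ hy])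
    rw [hp.eval_smul, mul_eq_zero] at hscaled
    simp [hscaled.resolve_left (pow_ne_zero _ hc)]
  have hsum : (∑ k, X k : MvPolynomial σ K) ≠ 0 := fun h0 => by
    simpa using congrArg (eval 1) h0
  exact (mul_eq_zero.1 hmul).resolve_right hsum

end MvPolynomial

open MvPolynomial in
/-- Biermann's Theorem: a nonzero form of degree `d` in `n` variables does not
vanish at all lattice points `i` with `i₁ + ⋯ + i_n = d`. -/
theorem biermann (n d : ℕ) (p : MvPolynomial (Fin n) ℂ)
    (hp : p.IsHomogeneous d) (hp0 : p ≠ 0) :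
    ∃ i : Fin n → ℕ, (∑ k, i k) = d ∧
      eval (fun k => (i k : ℂ)) p ≠ 0 := by
  by_contra! hvanish
  rcases Nat.eq_zero_or_pos d with rfl | hd
  · exact hp0 (eq_zero_of_eval_natCast_eq_zero_of_sum_le hp.totalDegree_le
      fun i hi => hvanish i (Nat.le_zero.1 hi))
  cases n with
  | zero => exact hd.ne ((isHomogeneous_of_isEmpty _ _ p).inj_right hp hp0)
  | succ m =>
    exact hp0 (hp.eq_zero_of_eval_eq_zero_of_sum_eq hd.ne'
      (eval_eq_zero_of_sum_eq_of_eval_natCast_eq_zero hp.totalDegree_le hvanish))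
end
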